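/- (Step 2 composite inequality.) Let H ∈ ℝᴺˣᴺ be symmetric, and let K₁, K₂ ∈ ℝᴺˣᴺ be diagonal matrices with positive diagonal entries such that M := H K₂ − K₁ is symmetric. Let κ₁, ε₁ > 0 satisfy λ_min(M) ≤ ε₁κ₁ − 1. Let e₁, e₂, e₃ ∈ ℝᴺ with e₂ ≠ 0, and let d, d̂, u ∈ ℝᴺ satisfy |d| ≤ Δ_v and |u| ≤ Δ̄_v for constants Δ_v, Δ̄_v ≥ 0; write d̃ := d − d̂. Then (e₂/|e₂|)ᵀ( H e₃ − H K₂ e₂ − K₁² e₁ + K₁ e₂ ) + κ₁ d̂ᵀ d̃ + (1/ε₁) uᵀ d̃ ≤ −min{λ_min(M), ε₁κ₁ − 1} · ( |e₂| + (1/(2ε₁))|d̃|² ) + |H e₃| + λ_max(K₁²)|e₁| + (κ₁/2)Δ_v² + (1/(2ε₁))Δ̄_v². -/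

import Mathlib

/-- The Euclidean norm on `ℝⁿ`. -/
noncomputable def enormEuclid {n : ℕ} (x : Fin n → ℝ) : ℝ := Real.sqrt (∑ i, x i ^ 2)

open Matrix

lemma enorm_nonneg' {n : ℕ} (x : Fin n → ℝ) : 0 ≤ enormEuclid x := Real.sqrt_nonneg _

lemma enorm_sq' {n : ℕ} (x : Fin n → ℝ) : enormEuclid x ^ 2 = ∑ i, x i ^ 2 :=
  Real.sq_sqrt (Finset.sum_nonneg fun _ _ => sq_nonneg _)

lemma enorm_neg' {n : ℕ} (x : Fin n → ℝ) : enormEuclid (-x) = enormEuclid x := by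
  unfold enormEuclid; simp

lemma dot_le_enorm {n : ℕ} (x y : Fin n → ℝ) : x ⬝ᵥ y ≤ enormEuclid x * enormEuclid y :=
  Real.sum_mul_le_sqrt_mul_sqrt _ _ _

lemma dot_self_eq {n : ℕ} (x : Fin n → ℝ) : x ⬝ᵥ x = enormEuclid x ^ 2 := by
  rw [enorm_sq']; simp [dotProduct, sq]

lemma rayleigh_min {n : ℕ} [NeZero n] {M : Matrix (Fin n) (Fin n) ℝ} (hM : M.IsHermitian)
    (x : Fin n → ℝ) : (⨅ i, hM.eigenvalues i) * (x ⬝ᵥ x) ≤ x ⬝ᵥ M.mulVec x := by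
  have hUU : (hM.eigenvectorUnitary : Matrix (Fin n) (Fin n) ℝ) *
      star (hM.eigenvectorUnitary : Matrix (Fin n) (Fin n) ℝ) = 1 :=
    (Matrix.mem_unitaryGroup_iff).mp hM.eigenvectorUnitary.2
  set U := (hM.eigenvectorUnitary : Matrix (Fin n) (Fin n) ℝ) with hU
  have hstar : star U *ᵥ x = x ᵥ* U := by
    funext j
    simp [Matrix.mulVec, Matrix.vecMul, dotProduct, Matrix.star_apply, mul_comm]
  have hxx : x ⬝ᵥ x = (x ᵥ* U) ⬝ᵥ (x ᵥ* U) := by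
    calc x ⬝ᵥ x = (x ᵥ* (U * star U)) ⬝ᵥ x := by rw [hUU, Matrix.vecMul_one]
      _ = ((x ᵥ* U) ᵥ* star U) ⬝ᵥ x := by rw [Matrix.vecMul_vecMul]
      _ = (x ᵥ* U) ⬝ᵥ (star U *ᵥ x) := (Matrix.dotProduct_mulVec _ _ _).symm
      _ = (x ᵥ* U) ⬝ᵥ (x ᵥ* U) := by rw [hstar]
  have hMx : x ⬝ᵥ M.mulVec x = ∑ i, hM.eigenvalues i * (x ᵥ* U) i ^ 2 := by
    calc x ⬝ᵥ M.mulVec x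
        = x ⬝ᵥ (U * Matrix.diagonal (RCLike.ofReal ∘ hM.eigenvalues) * star U) *ᵥ x := by
          conv_lhs => rw [hM.spectral_theorem]
          rfl
      _ = (x ᵥ* (U * Matrix.diagonal (RCLike.ofReal ∘ hM.eigenvalues))) ⬝ᵥ (star U *ᵥ x) := by
          rw [← Matrix.mulVec_mulVec, Matrix.dotProduct_mulVec]
      _ = ((x ᵥ* U) ᵥ* Matrix.diagonal (RCLike.ofReal ∘ hM.eigenvalues)) ⬝ᵥ (x ᵥ* U) := by
          rw [← Matrix.vecMul_vecMul, hstar]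
      _ = ∑ i, hM.eigenvalues i * (x ᵥ* U) i ^ 2 := by
          simp only [dotProduct, Matrix.vecMul_diagonal, Function.comp_apply,
            RCLike.ofReal_real_eq_id, id_eq]
          exact Finset.sum_congr rfl fun i _ => by ring
  rw [hxx, hMx]
  simp only [dotProduct]
  rw [Finset.mul_sum]
  refine Finset.sum_le_sum fun i _ => ?_
  have h0 : (⨅ j, hM.eigenvalues j) ≤ hM.eigenvalues i :=
    ciInf_le (Set.Finite.bddBelow (Set.finite_range _)) i
  calc (⨅ j, hM.eigenvalues j) * ((x ᵥ* U) i * (x ᵥ* U) i)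
      = (⨅ j, hM.eigenvalues j) * (x ᵥ* U) i ^ 2 := by ring
    _ ≤ hM.eigenvalues i * (x ᵥ* U) i ^ 2 := mul_le_mul_of_nonneg_right h0 (sq_nonneg _)

lemma enorm_diag_sq_le {n : ℕ} [NeZero n] (k : Fin n → ℝ) (v : Fin n → ℝ) :
    enormEuclid ((Matrix.diagonal k * Matrix.diagonal k).mulVec v) ≤ (⨆ i, k i ^ 2) * enormEuclid v := by
  have hbdd : BddAbove (Set.range fun i => k i ^ 2) := Set.Finite.bddAbove (Set.finite_range _)
  have hsle : ∀ i, k i ^ 2 ≤ ⨆ j, k j ^ 2 := fun i => le_ciSup hbdd i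
  have hs0 : 0 ≤ ⨆ i, k i ^ 2 :=
    le_trans (sq_nonneg (k (Classical.arbitrary (Fin n)))) (hsle _)
  rw [Matrix.diagonal_mul_diagonal]
  unfold enormEuclid
  have hmv : ∀ i, (Matrix.diagonal (k * k)).mulVec v i = (k i * k i) * v i := by
    intro i; simp [Matrix.mulVec_diagonal]
  calc Real.sqrt (∑ i, (Matrix.diagonal (k * k)).mulVec v i ^ 2)
      ≤ Real.sqrt (∑ i, (⨆ j, k j ^ 2) ^ 2 * v i ^ 2) := by
        apply Real.sqrt_le_sqrt
        apply Finset.sum_le_sum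
        intro i _
        rw [hmv i, mul_pow]
        have hi : (k i * k i) ^ 2 ≤ (⨆ j, k j ^ 2) ^ 2 := by
          have h1 := hsle i
          nlinarith [sq_nonneg (k i)]
        exact mul_le_mul_of_nonneg_right hi (sq_nonneg _)
    _ = (⨆ j, k j ^ 2) * Real.sqrt (∑ i, v i ^ 2) := by
        rw [← Finset.mul_sum, Real.sqrt_mul (sq_nonneg _), Real.sqrt_sq hs0]

/-- Step 2 composite inequality of the backstepping design: with `H` symmetric,
`K₁ = diag k₁`, `K₂ = diag k₂` with positive entries, `M = H K₂ - K₁` symmetric with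
`λ_min(M) ≤ ε₁ κ₁ - 1`, `e₂ ≠ 0`, `|d| ≤ Δ_v`, `|u| ≤ Δ̄_v`, and `d̃ = d - d̂`:
`sgn(e₂)ᵀ(H e₃ - H K₂ e₂ - K₁² e₁ + K₁ e₂) + κ₁ d̂ᵀ d̃ + (1/ε₁) uᵀ d̃
  ≤ -min(λ_min(M), ε₁κ₁ - 1)(|e₂| + |d̃|²/(2ε₁)) + |H e₃| + λ_max(K₁²)|e₁|
    + (κ₁/2)Δ_v² + Δ̄_v²/(2ε₁)`. -/
theorem backstepping_step2_composite {N : ℕ}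
    (H : Matrix (Fin N) (Fin N) ℝ) (hH : H.IsHermitian)
    (k₁ k₂ : Fin N → ℝ) (hk₁ : ∀ i, 0 < k₁ i) (hk₂ : ∀ i, 0 < k₂ i)
    (hM : (H * Matrix.diagonal k₂ - Matrix.diagonal k₁).IsHermitian)
    (κ₁ ε₁ : ℝ) (hκ₁ : 0 < κ₁) (hε₁ : 0 < ε₁)
    (hgap : (⨅ i, hM.eigenvalues i) ≤ ε₁ * κ₁ - 1)
    (e₁ e₂ e₃ : Fin N → ℝ) (he₂ : e₂ ≠ 0)
    (d dhat u : Fin N → ℝ) (Δv Δvbar : ℝ) (hΔv : 0 ≤ Δv) (hΔvbar : 0 ≤ Δvbar)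
    (hd : enormEuclid d ≤ Δv) (hu : enormEuclid u ≤ Δvbar) :
    (1 / enormEuclid e₂) * (e₂ ⬝ᵥ (H.mulVec e₃ - (H * Matrix.diagonal k₂).mulVec e₂ -
        (Matrix.diagonal k₁ * Matrix.diagonal k₁).mulVec e₁ +
        (Matrix.diagonal k₁).mulVec e₂)) +
      κ₁ * (dhat ⬝ᵥ (d - dhat)) + (1 / ε₁) * (u ⬝ᵥ (d - dhat)) ≤
    -(min (⨅ i, hM.eigenvalues i) (ε₁ * κ₁ - 1)) *
        (enormEuclid e₂ + (1 / (2 * ε₁)) * enormEuclid (d - dhat) ^ 2) +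
      enormEuclid (H.mulVec e₃) + (⨆ i, k₁ i ^ 2) * enormEuclid e₁ +
      (κ₁ / 2) * Δv ^ 2 + (1 / (2 * ε₁)) * Δvbar ^ 2 := by
  rcases Nat.eq_zero_or_pos N with h0 | hpos
  · exact absurd (by subst h0; funext i; exact i.elim0) he₂
  haveI : NeZero N := ⟨hpos.ne'⟩
  set m := min (⨅ i, hM.eigenvalues i) (ε₁ * κ₁ - 1) with hm
  clear_value m
  have hε₁' : ε₁ ≠ 0 := ne_of_gt hε₁
  have hn2 : 0 < enormEuclid e₂ := by
    unfold enormEuclid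
    apply Real.sqrt_pos.2
    obtain ⟨i, hi⟩ := Function.ne_iff.mp he₂
    exact Finset.sum_pos' (fun j _ => sq_nonneg _)
      ⟨i, Finset.mem_univ i, sq_pos_of_ne_zero (by simpa using hi)⟩
  have hn2' : enormEuclid e₂ ≠ 0 := ne_of_gt hn2
  -- split the big dot product
  have hsplit : e₂ ⬝ᵥ (H.mulVec e₃ - (H * Matrix.diagonal k₂).mulVec e₂ -
      (Matrix.diagonal k₁ * Matrix.diagonal k₁).mulVec e₁ +
      (Matrix.diagonal k₁).mulVec e₂) =
      e₂ ⬝ᵥ H.mulVec e₃ -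
      e₂ ⬝ᵥ ((H * Matrix.diagonal k₂ - Matrix.diagonal k₁).mulVec e₂) -
      e₂ ⬝ᵥ ((Matrix.diagonal k₁ * Matrix.diagonal k₁).mulVec e₁) := by
    rw [Matrix.sub_mulVec]
    simp only [dotProduct_add, dotProduct_sub]
    ring
  -- bound pieces
  have hA1 : e₂ ⬝ᵥ H.mulVec e₃ ≤ enormEuclid e₂ * enormEuclid (H.mulVec e₃) := dot_le_enorm _ _
  have hA2 : -(e₂ ⬝ᵥ ((Matrix.diagonal k₁ * Matrix.diagonal k₁).mulVec e₁)) ≤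
      enormEuclid e₂ * ((⨆ i, k₁ i ^ 2) * enormEuclid e₁) := by
    have h1 : (-e₂) ⬝ᵥ ((Matrix.diagonal k₁ * Matrix.diagonal k₁).mulVec e₁) ≤
        enormEuclid (-e₂) * enormEuclid ((Matrix.diagonal k₁ * Matrix.diagonal k₁).mulVec e₁) :=
      dot_le_enorm _ _
    rw [neg_dotProduct, enorm_neg'] at h1
    have h3 := enorm_diag_sq_le k₁ e₁
    calc -(e₂ ⬝ᵥ ((Matrix.diagonal k₁ * Matrix.diagonal k₁).mulVec e₁)) ≤
        enormEuclid e₂ * enormEuclid ((Matrix.diagonal k₁ * Matrix.diagonal k₁).mulVec e₁) := h1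
      _ ≤ enormEuclid e₂ * ((⨆ i, k₁ i ^ 2) * enormEuclid e₁) := mul_le_mul_of_nonneg_left h3 hn2.le
  have hA3 : m * enormEuclid e₂ ^ 2 ≤
      e₂ ⬝ᵥ ((H * Matrix.diagonal k₂ - Matrix.diagonal k₁).mulVec e₂) := by
    have h1 := rayleigh_min hM e₂
    rw [dot_self_eq] at h1
    have h2 : m ≤ ⨅ i, hM.eigenvalues i := hm ▸ min_le_left _ _
    have h4 : m * enormEuclid e₂ ^ 2 ≤ (⨅ i, hM.eigenvalues i) * enormEuclid e₂ ^ 2 :=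
      mul_le_mul_of_nonneg_right h2 (sq_nonneg _)
    linarith
  have hF1 : (1 / enormEuclid e₂) * (e₂ ⬝ᵥ (H.mulVec e₃ - (H * Matrix.diagonal k₂).mulVec e₂ -
      (Matrix.diagonal k₁ * Matrix.diagonal k₁).mulVec e₁ +
      (Matrix.diagonal k₁).mulVec e₂)) ≤
      enormEuclid (H.mulVec e₃) + (⨆ i, k₁ i ^ 2) * enormEuclid e₁ - m * enormEuclid e₂ := by
    rw [hsplit]
    have hT : e₂ ⬝ᵥ H.mulVec e₃ -
        e₂ ⬝ᵥ ((H * Matrix.diagonal k₂ - Matrix.diagonal k₁).mulVec e₂) -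
        e₂ ⬝ᵥ ((Matrix.diagonal k₁ * Matrix.diagonal k₁).mulVec e₁) ≤
        enormEuclid e₂ * enormEuclid (H.mulVec e₃) + enormEuclid e₂ * ((⨆ i, k₁ i ^ 2) * enormEuclid e₁) -
        m * enormEuclid e₂ ^ 2 := by linarith
    have h5 := mul_le_mul_of_nonneg_left hT (by positivity : (0:ℝ) ≤ 1 / enormEuclid e₂)
    have h6 : (1 / enormEuclid e₂) * (enormEuclid e₂ * enormEuclid (H.mulVec e₃) +
        enormEuclid e₂ * ((⨆ i, k₁ i ^ 2) * enormEuclid e₁) - m * enormEuclid e₂ ^ 2) =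
        enormEuclid (H.mulVec e₃) + (⨆ i, k₁ i ^ 2) * enormEuclid e₁ - m * enormEuclid e₂ := by
      field_simp
    linarith
  -- disturbance terms
  have htt0 : 0 ≤ enormEuclid (d - dhat) := enorm_nonneg' _
  have hdt : d ⬝ᵥ (d - dhat) ≤ Δv ^ 2 / 2 + enormEuclid (d - dhat) ^ 2 / 2 := by
    have h1 : d ⬝ᵥ (d - dhat) ≤ enormEuclid d * enormEuclid (d - dhat) := dot_le_enorm _ _
    have h2 : enormEuclid d * enormEuclid (d - dhat) ≤ Δv * enormEuclid (d - dhat) :=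
      mul_le_mul_of_nonneg_right hd htt0
    nlinarith [sq_nonneg (Δv - enormEuclid (d - dhat))]
  have hut : u ⬝ᵥ (d - dhat) ≤ Δvbar ^ 2 / 2 + enormEuclid (d - dhat) ^ 2 / 2 := by
    have h1 : u ⬝ᵥ (d - dhat) ≤ enormEuclid u * enormEuclid (d - dhat) := dot_le_enorm _ _
    have h2 : enormEuclid u * enormEuclid (d - dhat) ≤ Δvbar * enormEuclid (d - dhat) :=
      mul_le_mul_of_nonneg_right hu htt0
    nlinarith [sq_nonneg (Δvbar - enormEuclid (d - dhat))]
  have hdhatt : dhat ⬝ᵥ (d - dhat) = d ⬝ᵥ (d - dhat) - enormEuclid (d - dhat) ^ 2 := by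
    rw [← dot_self_eq, ← sub_dotProduct]
    congr 1
    funext i
    simp
  have hF2 : κ₁ * (dhat ⬝ᵥ (d - dhat)) ≤
      κ₁ / 2 * Δv ^ 2 - κ₁ / 2 * enormEuclid (d - dhat) ^ 2 := by
    rw [hdhatt]
    nlinarith
  have hF3 : (1 / ε₁) * (u ⬝ᵥ (d - dhat)) ≤
      (1 / (2 * ε₁)) * Δvbar ^ 2 + (1 / (2 * ε₁)) * enormEuclid (d - dhat) ^ 2 := by
    have h1 := mul_le_mul_of_nonneg_left hut (by positivity : (0:ℝ) ≤ 1 / ε₁)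
    have h2 : (1 / ε₁) * (Δvbar ^ 2 / 2 + enormEuclid (d - dhat) ^ 2 / 2) =
        (1 / (2 * ε₁)) * Δvbar ^ 2 + (1 / (2 * ε₁)) * enormEuclid (d - dhat) ^ 2 := by
      rw [one_div, one_div, mul_inv]
      ring
    linarith
  -- combine the t² terms using m ≤ ε₁κ₁ - 1
  have hkey : -(κ₁ / 2) * enormEuclid (d - dhat) ^ 2 + (1 / (2 * ε₁)) * enormEuclid (d - dhat) ^ 2 ≤
      -(m * ((1 / (2 * ε₁)) * enormEuclid (d - dhat) ^ 2)) := by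
    have h7 : m ≤ ε₁ * κ₁ - 1 := hm ▸ min_le_right _ _
    have h8 : m * ((1 / (2 * ε₁)) * enormEuclid (d - dhat) ^ 2) ≤
        (ε₁ * κ₁ - 1) * ((1 / (2 * ε₁)) * enormEuclid (d - dhat) ^ 2) :=
      mul_le_mul_of_nonneg_right h7 (by positivity)
    have h9 : (ε₁ * κ₁ - 1) * ((1 / (2 * ε₁)) * enormEuclid (d - dhat) ^ 2) =
        κ₁ / 2 * enormEuclid (d - dhat) ^ 2 - (1 / (2 * ε₁)) * enormEuclid (d - dhat) ^ 2 := by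
      field_simp
    linarith
  have hexp : -m * (enormEuclid e₂ + (1 / (2 * ε₁)) * enormEuclid (d - dhat) ^ 2) =
      -(m * enormEuclid e₂) - m * ((1 / (2 * ε₁)) * enormEuclid (d - dhat) ^ 2) := by ring
  linarith [hF1, hF2, hF3, hkey, hexp.ge, hexp.le]
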